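/- Let 0 < Λ ≤ 1 and 0 < θ < π − arcsin Λ. Then η_Λ(θ) is a minimizer of f_{θ,Λ} on [0, (π − θ)/2]; moreover, if Λ < 1 then η_Λ(θ) is the unique such minimizer. -/
import Mathlib


open Real Set

noncomputable section

/-- `f_{θ,Λ}(η) = cos(θ + 2η) + 2Λ sin η`. -/
def fFun (θ Λ η : ℝ) : ℝ := Real.cos (θ + 2 * η) + 2 * Λ * Real.sin η

end

private lemma keyId (Λ a s u : ℝ) (h : Real.sin s = Λ * Real.cos a) :
    Real.cos (s + 4*u) + 2*Λ*Real.sin (a + 2*u) - (Real.cos s + 2*Λ*Real.sin a)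
    = 4 * Real.sin u ^ 2 *
      (2*Λ*Real.cos a*Real.cos u*Real.sin u - 2*Real.cos s*Real.cos u^2 - Λ*Real.sin a) := by
  have e1 : s + 4*u = s + 2*(2*u) := by ring
  rw [e1]
  simp only [Real.cos_add, Real.sin_add, Real.cos_two_mul, Real.sin_two_mul, h]
  linear_combination (-8*Real.sin u*Real.cos u*Real.cos a*Λ + 8*Real.cos u^2*Real.cos s
    + 4*Real.sin a*Λ) * Real.sin_sq_add_cos_sq u

set_option maxHeartbeats 2000000 in
theorem stmt6 (Λ θ η : ℝ) (hΛ0 : 0 < Λ) (hΛ1 : Λ ≤ 1)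
    (hθ0 : 0 < θ) (hθ : θ < Real.pi - Real.arcsin Λ)
    (hη : η ∈ Set.Icc (max 0 (Real.pi / 2 - θ)) ((Real.pi - θ) / 2))
    (heq : Λ * Real.cos η = Real.sin (θ + 2 * η)) :
    (∀ η' ∈ Set.Icc 0 ((Real.pi - θ) / 2), fFun θ Λ η ≤ fFun θ Λ η') ∧
    (Λ < 1 → ∀ η' ∈ Set.Icc 0 ((Real.pi - θ) / 2),
      (∀ η'' ∈ Set.Icc 0 ((Real.pi - θ) / 2), fFun θ Λ η' ≤ fFun θ Λ η'') → η' = η) := by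
  obtain ⟨hηl, hηu⟩ := hη
  have hπ := Real.pi_pos
  have harc : 0 < Real.arcsin Λ := Real.arcsin_pos.mpr hΛ0
  have hθπ : θ < Real.pi := by linarith
  have ha0 : 0 ≤ η := le_trans (le_max_left _ _) hηl
  have hamax : Real.pi / 2 - θ ≤ η := le_trans (le_max_right _ _) hηl
  have haq : η ≤ Real.pi / 2 := by linarith
  have hca : 0 ≤ Real.cos η := Real.cos_nonneg_of_mem_Icc ⟨by linarith, haq⟩
  have hsa : 0 ≤ Real.sin η := Real.sin_nonneg_of_nonneg_of_le_pi ha0 (by linarith)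
  have hs1 : Real.pi / 2 ≤ θ + 2*η := by
    rcases le_total θ (Real.pi / 2) with h | h
    · linarith
    · linarith
  have hs2 : θ + 2*η ≤ Real.pi := by linarith
  have hcs : Real.cos (θ + 2*η) ≤ 0 :=
    Real.cos_nonpos_of_pi_div_two_le_of_le hs1 (by linarith)
  -- sin η ≤ -cos (θ+2η)
  have hsw : Real.sin η ≤ -Real.cos (θ + 2*η) := by
    have h1 := Real.sin_sq_add_cos_sq (θ + 2*η)
    have h2 := Real.sin_sq_add_cos_sq η
    rw [← heq] at h1
    have hsq : Real.sin η ^ 2 ≤ (-Real.cos (θ + 2*η)) ^ 2 := by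
      nlinarith [sq_nonneg (Real.cos η), mul_nonneg (mul_nonneg (sub_nonneg.2 hΛ1)
        (by linarith : (0:ℝ) ≤ 1 + Λ)) (sq_nonneg (Real.cos η))]
    have := Real.sqrt_le_sqrt hsq
    rwa [Real.sqrt_sq hsa, Real.sqrt_sq (by linarith : (0:ℝ) ≤ -Real.cos (θ + 2*η))] at this
  -- η > 0
  have hapos : 0 < η := by
    rcases ha0.lt_or_eq with h | h
    · exact h
    · exfalso
      rw [← h] at heq hamax
      simp only [mul_zero, add_zero, Real.cos_zero, mul_one] at heq
      have hh : Real.arcsin Λ = Real.pi - θ := by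
        rw [heq, ← Real.sin_pi_sub, Real.arcsin_sin (by linarith) (by linarith)]
      linarith
  have hsapos : 0 < Real.sin η := Real.sin_pos_of_pos_of_lt_pi hapos (by linarith)
  -- the difference identity
  have hdiff : ∀ η', fFun θ Λ η' - fFun θ Λ η =
      4 * Real.sin ((η' - η)/2) ^ 2 *
        (2*Λ*Real.cos η*Real.cos ((η' - η)/2)*Real.sin ((η' - η)/2)
          - 2*Real.cos (θ + 2*η)*Real.cos ((η' - η)/2)^2 - Λ*Real.sin η) := by
    intro η'
    have key := keyId Λ η (θ + 2*η) ((η' - η)/2) heq.symm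
    have e2 : θ + 2*η + 4*((η' - η)/2) = θ + 2*η' := by ring
    have e3 : η + 2*((η' - η)/2) = η' := by ring
    rw [e2, e3] at key
    simpa [fFun] using key
  -- nonnegativity of the bracket
  have hbr : ∀ η' ∈ Set.Icc (0:ℝ) ((Real.pi - θ) / 2),
      0 ≤ 2*Λ*Real.cos η*Real.cos ((η' - η)/2)*Real.sin ((η' - η)/2)
          - 2*Real.cos (θ + 2*η)*Real.cos ((η' - η)/2)^2 - Λ*Real.sin η := by
    rintro η' ⟨h0', hb'⟩
    set u := (η' - η)/2 with hu
    have hub : -(Real.pi/2) ≤ 2*u ∧ 2*u ≤ Real.pi/2 := by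
      constructor <;> linarith
    have hcu : 0 ≤ Real.cos u :=
      Real.cos_nonneg_of_mem_Icc ⟨by linarith [hub.1], by linarith [hub.2]⟩
    have hc2 : 0 ≤ 2*Real.cos u^2 - 1 := by
      have := Real.cos_nonneg_of_mem_Icc (x := 2*u) ⟨by linarith [hub.1], by linarith [hub.2]⟩
      rwa [Real.cos_two_mul] at this
    rcases le_or_gt 0 u with h | h
    · have hsu : 0 ≤ Real.sin u :=
        Real.sin_nonneg_of_nonneg_of_le_pi h (by linarith [hub.2])
      have hΛsa : Λ * Real.sin η ≤ Real.sin η := by nlinarith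
      linarith [mul_nonneg (mul_nonneg (mul_nonneg hΛ0.le hca) hcu) hsu,
        mul_nonneg (mul_nonneg hΛ0.le hsa) hc2,
        mul_nonneg (by linarith : 0 ≤ -Real.cos (θ + 2*η) - Λ*Real.sin η)
          (sq_nonneg (Real.cos u))]
    · have hsu : Real.sin u ≤ 0 := by
        have : 0 ≤ Real.sin (-u) :=
          Real.sin_nonneg_of_nonneg_of_le_pi (by linarith) (by linarith [hub.1])
        rw [Real.sin_neg] at this; linarith
      have hsη' : 0 ≤ Real.sin η' :=
        Real.sin_nonneg_of_nonneg_of_le_pi h0' (by linarith)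
      have hsexp : Real.sin η' = Real.sin η * (2*Real.cos u^2 - 1)
          + Real.cos η * (2*Real.sin u*Real.cos u) := by
        have e3 : η' = η + 2*u := by rw [hu]; ring
        rw [e3, Real.sin_add, Real.sin_two_mul, Real.cos_two_mul]
      rw [hsexp] at hsη'
      linarith [mul_nonneg (mul_nonneg (sub_nonneg.2 hΛ1) (mul_nonneg hca hcu))
          (neg_nonneg.2 hsu),
        mul_nonneg (sq_nonneg (Real.cos u)) (by linarith : 0 ≤ -Real.cos (θ + 2*η) - Real.sin η),
        mul_nonneg hsa (sub_nonneg.2 hΛ1)]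
  constructor
  · intro η' hη'
    have := hdiff η'
    have hb := hbr η' hη'
    linarith [mul_nonneg (mul_nonneg (by norm_num : (0:ℝ) ≤ 4)
      (sq_nonneg (Real.sin ((η' - η)/2)))) hb]
  · -- uniqueness
    intro hΛlt η' hη' hmin
    by_contra hne
    -- strict positivity of the bracket
    obtain ⟨h0', hb'⟩ := hη'
    set u := (η' - η)/2 with hu
    have hune : u ≠ 0 := by
      intro h; apply hne; have : η' - η = 0 := by
        have := h; rw [hu] at this; linarith
      linarith
    have hub : -(Real.pi/2) ≤ 2*u ∧ 2*u ≤ Real.pi/2 := by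
      constructor <;> linarith
    have hcu : 0 ≤ Real.cos u :=
      Real.cos_nonneg_of_mem_Icc ⟨by linarith [hub.1], by linarith [hub.2]⟩
    have hc2 : 0 ≤ 2*Real.cos u^2 - 1 := by
      have := Real.cos_nonneg_of_mem_Icc (x := 2*u) ⟨by linarith [hub.1], by linarith [hub.2]⟩
      rwa [Real.cos_two_mul] at this
    have hwΛ : Λ * Real.sin η < -Real.cos (θ + 2*η) := by
      linarith [hsw, mul_pos hsapos (show (0:ℝ) < 1 - Λ by linarith)]
    have hbrpos : 0 < 2*Λ*Real.cos η*Real.cos u*Real.sin u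
        - 2*Real.cos (θ + 2*η)*Real.cos u^2 - Λ*Real.sin η := by
      rcases lt_or_gt_of_ne hune with h | h
      · -- u < 0
        have hsu : Real.sin u < 0 := by
          have : 0 < Real.sin (-u) :=
            Real.sin_pos_of_pos_of_lt_pi (by linarith) (by linarith [hub.1])
          rw [Real.sin_neg] at this; linarith
        have hsη' : 0 ≤ Real.sin η' :=
          Real.sin_nonneg_of_nonneg_of_le_pi h0' (by linarith)
        have hsexp : Real.sin η' = Real.sin η * (2*Real.cos u^2 - 1)
            + Real.cos η * (2*Real.sin u*Real.cos u) := by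
          have e3 : η' = η + 2*u := by rw [hu]; ring
          rw [e3, Real.sin_add, Real.sin_two_mul, Real.cos_two_mul]
        rw [hsexp] at hsη'
        linarith [mul_nonneg (mul_nonneg (sub_nonneg.2 hΛ1) (mul_nonneg hca hcu))
            (neg_nonneg.2 hsu.le),
          mul_nonneg (sq_nonneg (Real.cos u))
            (by linarith : 0 ≤ -Real.cos (θ + 2*η) - Real.sin η),
          mul_pos hsapos (by linarith : (0:ℝ) < 1 - Λ)]
      · -- u > 0
        have hsu : 0 < Real.sin u :=
          Real.sin_pos_of_pos_of_lt_pi h (by linarith [hub.2])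
        linarith [mul_nonneg (mul_nonneg (mul_nonneg hΛ0.le hca) hcu) hsu.le,
          mul_nonneg (mul_nonneg hΛ0.le hsa) hc2,
          mul_nonneg (by linarith : 0 ≤ 2*Real.cos u^2 - 1)
            (by linarith : 0 ≤ -Real.cos (θ + 2*η) - Λ*Real.sin η)]
    have hsu2 : 0 < Real.sin u ^ 2 := by
      have : Real.sin u ≠ 0 := by
        rcases lt_or_gt_of_ne hune with h | h
        · have : 0 < Real.sin (-u) :=
            Real.sin_pos_of_pos_of_lt_pi (by linarith) (by linarith [hub.1])
          rw [Real.sin_neg] at this; intro hc; rw [hc] at this; linarith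
        · have := Real.sin_pos_of_pos_of_lt_pi h (by linarith [hub.2])
          linarith
      positivity
    have hlt : fFun θ Λ η < fFun θ Λ η' := by
      have := hdiff η'
      linarith [mul_pos (mul_pos (by norm_num : (0:ℝ) < 4) hsu2) hbrpos]
    have := hmin η ⟨ha0, hηu⟩
    linarith
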